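/- For all sufficiently large n, the n-th Ulam number satisfies a_n ≤ 1.454^n. -/

import Mathlib

/-- `m` has exactly one representation as `a i + a j` with `1 ≤ i < j ≤ n`. -/
def UlamUniqueRep (a : ℕ → ℕ) (n m : ℕ) : Prop :=
  ∃! p : ℕ × ℕ, 1 ≤ p.1 ∧ p.1 < p.2 ∧ p.2 ≤ n ∧ a p.1 + a p.2 = m

/-- `a` (indexed from 1) is the Ulam sequence: `a 1 = 1`, `a 2 = 2`, and for `n ≥ 2`,
`a (n+1)` is the least integer exceeding `a n` uniquely representable as the sum of
two distinct earlier terms. -/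
def IsUlamSeq (a : ℕ → ℕ) : Prop :=
  a 1 = 1 ∧ a 2 = 2 ∧
    ∀ n, 2 ≤ n → IsLeast {m | a n < m ∧ UlamUniqueRep a n m} (a (n + 1))

/-!
Any representation `a i + a j = a k + a n` (`1 ≤ k < n`, `i < j ≤ n`) other than `(k, n)` has
`k < i < j < n`. So `a k + a (k + 2)` is uniquely representable by terms up to `a (k + 2)`, whence
`a (k + 3) ≤ a k + a (k + 2)`; likewise `a (k + 4) ≤ a k + a (k + 3)` unless
`a k + a (k + 3) = a (k + 1) + a (k + 2)`. Together these give `a (k + 6) ≤ a (k + 5) + a (k + 2)`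
or `a (k + 6) ≤ a (k + 4) + a (k + 3) + a k`, and since `r = 1.45` satisfies both
`r ^ 5 + r ^ 2 ≤ r ^ 6` and `r ^ 4 + r ^ 3 + 1 ≤ r ^ 6`, induction gives `a n = O(1.45 ^ n)`.
-/

open Filter

namespace IsUlamSeq

variable {a : ℕ → ℕ}

lemma lt_succ (ha : IsUlamSeq a) {n : ℕ} (hn : 1 ≤ n) : a n < a (n + 1) := by
  obtain rfl | hn := hn.eq_or_lt
  · rw [ha.1, ha.2.1]
    norm_num
  · exact (ha.2.2 n hn).1.1

lemma strictMonoOn (ha : IsUlamSeq a) : StrictMonoOn a (Set.Ici 1) :=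
  strictMonoOn_of_lt_add_one Set.ordConnected_Ici fun _ _ hn _ => ha.lt_succ hn

lemma pos (ha : IsUlamSeq a) {n : ℕ} (hn : 1 ≤ n) : 0 < a n := by
  have := ha.strictMonoOn.monotoneOn Set.self_mem_Ici hn hn
  rw [ha.1] at this
  omega

lemma eq_or_lt_of_add_eq (ha : IsUlamSeq a) {i j k n : ℕ} (hi : 1 ≤ i) (hij : i < j)
    (hjn : j ≤ n) (hk : 1 ≤ k) (h : a i + a j = a k + a n) :
    (i = k ∧ j = n) ∨ (k < i ∧ j < n) := by
  have hmono := ha.strictMonoOn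
  obtain rfl | hjn := hjn.eq_or_lt
  · exact .inl ⟨hmono.injOn hi hk (by omega), rfl⟩
  · have : a j < a n := hmono (show 1 ≤ j by omega) (show 1 ≤ n by omega) hjn
    exact .inr ⟨(hmono.lt_iff_lt hk hi).1 (by omega), hjn⟩

lemma uniqueRep_add (ha : IsUlamSeq a) {k n : ℕ} (hk : 1 ≤ k) (hkn : k < n)
    (hinner : ∀ i j, k < i → i < j → j < n → a i + a j ≠ a k + a n) :
    UlamUniqueRep a n (a k + a n) := by
  refine ⟨(k, n), ⟨hk, hkn, le_rfl, rfl⟩, ?_⟩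
  rintro ⟨i, j⟩ ⟨hi, hij, hjn, hsum⟩
  rcases ha.eq_or_lt_of_add_eq hi hij hjn hk hsum with ⟨rfl, rfl⟩ | ⟨hki, hjn⟩
  · rfl
  · exact absurd hsum (hinner i j hki hij hjn)

lemma succ_le_add (ha : IsUlamSeq a) {k n : ℕ} (hk : 1 ≤ k) (hkn : k < n)
    (hinner : ∀ i j, k < i → i < j → j < n → a i + a j ≠ a k + a n) :
    a (n + 1) ≤ a k + a n :=
  (ha.2.2 n (by omega)).2 ⟨by have := ha.pos hk; omega, ha.uniqueRep_add hk hkn hinner⟩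

lemma add_three_le (ha : IsUlamSeq a) {k : ℕ} (hk : 1 ≤ k) : a (k + 3) ≤ a k + a (k + 2) :=
  ha.succ_le_add hk (by omega) fun _ _ _ _ _ => by omega

lemma add_four_le_or (ha : IsUlamSeq a) {k : ℕ} (hk : 1 ≤ k) :
    a (k + 4) ≤ a k + a (k + 3) ∨ a k + a (k + 3) = a (k + 1) + a (k + 2) := by
  rw [or_iff_not_imp_right]
  intro hpin
  refine ha.succ_le_add hk (by omega) fun i j hki hij hjn hsum => hpin ?_
  obtain rfl : i = k + 1 := by omega
  obtain rfl : j = k + 2 := by omega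
  exact hsum.symm

lemma add_six_le_or (ha : IsUlamSeq a) {k : ℕ} (hk : 1 ≤ k) :
    a (k + 6) ≤ a (k + 5) + a (k + 2) ∨ a (k + 6) ≤ a (k + 4) + a (k + 3) + a k := by
  rcases ha.add_four_le_or (k := k + 2) (by omega) with h | hpin
  · simp only [add_assoc, Nat.reduceAdd] at h
    exact .inl (by omega)
  · have h₁ := ha.add_three_le (k := k + 3) (by omega)
    have h₂ := ha.add_three_le hk
    simp only [add_assoc, Nat.reduceAdd] at hpin h₁
    exact .inr (by omega)

end IsUlamSeq

lemma exists_le_mul_pow_of_le_or_le {u : ℕ → ℝ} {r : ℝ} (hr : 1 ≤ r)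
    (h₁ : r ^ 5 + r ^ 2 ≤ r ^ 6) (h₂ : r ^ 4 + r ^ 3 + 1 ≤ r ^ 6)
    (hu : ∀ n, u (n + 6) ≤ u (n + 5) + u (n + 2) ∨
      u (n + 6) ≤ u (n + 4) + u (n + 3) + u n) :
    ∃ C, ∀ n, u n ≤ C * r ^ n := by
  set C := ∑ i ∈ Finset.range 6, |u i|
  have hC : 0 ≤ C := Finset.sum_nonneg fun i _ => abs_nonneg (u i)
  refine ⟨C, fun n => ?_⟩
  induction n using Nat.strong_induction_on with
  | _ n ih =>
    rcases Nat.lt_or_ge n 6 with hn | hn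
    · calc u n ≤ |u n| := le_abs_self _
        _ ≤ C := Finset.single_le_sum (fun i _ => abs_nonneg (u i)) (Finset.mem_range.2 hn)
        _ ≤ C * r ^ n := le_mul_of_one_le_right hC (one_le_pow₀ hr)
    · obtain ⟨m, rfl⟩ := Nat.exists_eq_add_of_le' hn
      have hCm : 0 ≤ C * r ^ m := mul_nonneg hC (pow_nonneg (zero_le_one.trans hr) m)
      rcases hu m with h | h
      · calc u (m + 6) ≤ C * r ^ (m + 5) + C * r ^ (m + 2) :=
              h.trans (add_le_add (ih _ (by omega)) (ih _ (by omega)))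
          _ = C * r ^ m * (r ^ 5 + r ^ 2) := by ring
          _ ≤ C * r ^ m * r ^ 6 := mul_le_mul_of_nonneg_left h₁ hCm
          _ = C * r ^ (m + 6) := by ring
      · calc u (m + 6) ≤ C * r ^ (m + 4) + C * r ^ (m + 3) + C * r ^ m :=
              h.trans <| add_le_add (add_le_add (ih _ (by omega)) (ih _ (by omega)))
                (ih _ (by omega))
          _ = C * r ^ m * (r ^ 4 + r ^ 3 + 1) := by ring
          _ ≤ C * r ^ m * r ^ 6 := mul_le_mul_of_nonneg_left h₂ hCm
          _ = C * r ^ (m + 6) := by ring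

lemma eventually_mul_pow_le_pow {r s : ℝ} (hr : 0 ≤ r) (hrs : r < s) (C : ℝ) :
    ∀ᶠ n in atTop, C * r ^ n ≤ s ^ n := by
  filter_upwards [((isLittleO_pow_pow_of_lt_left hr hrs).const_mul_left C).bound one_pos]
    with n hn
  calc C * r ^ n ≤ ‖C * r ^ n‖ := Real.le_norm_self _
    _ ≤ 1 * ‖s ^ n‖ := hn
    _ = s ^ n := by rw [one_mul, Real.norm_of_nonneg (pow_nonneg (hr.trans hrs.le) n)]

/-- Theorem 1: for all sufficiently large `n`, the `n`-th Ulam number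
satisfies `a n ≤ 1.454 ^ n`. -/
theorem ulam_growth_bound (a : ℕ → ℕ) (ha : IsUlamSeq a) :
    ∃ N : ℕ, ∀ n, N ≤ n → (a n : ℝ) ≤ 1.454 ^ n := by
  obtain ⟨C, hC⟩ := exists_le_mul_pow_of_le_or_le (u := fun n => (a (n + 1) : ℝ)) (r := 1.45)
    (by norm_num) (by norm_num) (by norm_num) fun n => by
      exact_mod_cast ha.add_six_le_or (k := n + 1) (by omega)
  obtain ⟨N, hN⟩ := eventually_atTop.1 (eventually_mul_pow_le_pow (by norm_num)
    (by norm_num : (1.45 : ℝ) < 1.454) C)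
  refine ⟨N + 1, fun n hn => ?_⟩
  obtain ⟨m, rfl⟩ : ∃ m, n = m + 1 := ⟨n - 1, by omega⟩
  calc (a (m + 1) : ℝ) ≤ C * 1.45 ^ m := hC m
    _ ≤ 1.454 ^ m := hN m (by omega)
    _ ≤ 1.454 ^ (m + 1) := pow_le_pow_right₀ (by norm_num) (by omega)
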